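/- arXiv:1302.1340 — 2 statements merged into one kernel-verified Lean document; each statement's English description precedes it below -/
import Mathlib

section
/- If φ and ψ are F-filters on X, then: (i) φ̂ = ⋂_{A ∈ φ} Â; (ii) φ = ⋂_{p ∈ φ̂} p; (iii) φ ⊆ ψ if and only if ψ̂ ⊆ φ̂; (iv) φ = ψ if and only if φ̂ = ψ̂. -/
open Set

variable {X : Type*} [Nonempty X] [TopologicalSpace X] [DiscreteTopology X]

/-- The set `X(f,r) = {x ∈ X : |f(x)| ≤ r}`. -/
def XSet (f : BoundedContinuousFunction X ℂ) (r : ℝ) : Set X := {x | ‖f x‖ ≤ r}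

/-- An `F`-family on `X`: a nonempty collection of nonempty subsets of `X` such that for every
member `A ≠ X` there are `B` in the collection and `f ∈ F` with `f(B) = {0}`,
`f(X \ A) = {1}`. -/
def FFamily (F : StarSubalgebra ℂ (BoundedContinuousFunction X ℂ)) (𝒜 : Set (Set X)) : Prop :=
  𝒜.Nonempty ∧ (∀ A ∈ 𝒜, A.Nonempty) ∧
    ∀ A ∈ 𝒜, A ≠ Set.univ →
      ∃ B ∈ 𝒜, ∃ f ∈ F, (∀ x ∈ B, f x = 0) ∧ ∀ x ∉ A, f x = 1

/-- A filter on the set `X`, viewed as a collection of subsets. -/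
def IsSetFilter (φ : Set (Set X)) : Prop :=
  φ.Nonempty ∧ (∀ A ∈ φ, ∀ B ∈ φ, A ∩ B ∈ φ) ∧
    (∀ A ∈ φ, ∀ B : Set X, A ⊆ B → B ∈ φ) ∧ ∅ ∉ φ

/-- An `F`-filter on `X` is a filter which is also an `F`-family. -/
def FFilter (F : StarSubalgebra ℂ (BoundedContinuousFunction X ℂ)) (φ : Set (Set X)) : Prop :=
  IsSetFilter φ ∧ FFamily F φ

/-- An `F`-ultrafilter on `X` is an `F`-filter maximal with respect to inclusion. -/
def FUltrafilter (F : StarSubalgebra ℂ (BoundedContinuousFunction X ℂ)) (φ : Set (Set X)) : Prop :=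
  FFilter F φ ∧ ∀ ψ : Set (Set X), FFilter F ψ → φ ⊆ ψ → ψ = φ

/-- `F₀ = {f ∈ F : X(f,r) ≠ ∅ for all r > 0}`. -/
def FZero (F : StarSubalgebra ℂ (BoundedContinuousFunction X ℂ)) :
    Set (BoundedContinuousFunction X ℂ) :=
  {f | f ∈ F ∧ ∀ r : ℝ, 0 < r → (XSet f r).Nonempty}

/-- `Z(A) = {f ∈ F : f(x) = 0 for all x ∈ A}`. -/
def ZSet (F : StarSubalgebra ℂ (BoundedContinuousFunction X ℂ)) (A : Set X) :
    Set (BoundedContinuousFunction X ℂ) :=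
  {f | f ∈ F ∧ ∀ x ∈ A, f x = 0}

/-- The finite intersection property. -/
def FIP (𝒜 : Set (Set X)) : Prop :=
  ∀ s : Finset (Set X), ↑s ⊆ 𝒜 → s.Nonempty → (⋂₀ (s : Set (Set X))).Nonempty

/-- A filter base on `X`. -/
def IsFilterBase (ℬ : Set (Set X)) : Prop :=
  ℬ.Nonempty ∧ ∅ ∉ ℬ ∧ ∀ A ∈ ℬ, ∀ B ∈ ℬ, ∃ C ∈ ℬ, C ⊆ A ∩ B

/-- The filter generated by a filter base. -/
def genFilter (ℬ : Set (Set X)) : Set (Set X) :=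
  {A | ∃ B ∈ ℬ, B ⊆ A}

/-- `δX`, the space of all `F`-ultrafilters on `X`. -/
def Delta (F : StarSubalgebra ℂ (BoundedContinuousFunction X ℂ)) : Type _ :=
  {p : Set (Set X) // FUltrafilter F p}

/-- `Â = {p ∈ δX : A ∈ p}`. -/
def hatSet (F : StarSubalgebra ℂ (BoundedContinuousFunction X ℂ)) (A : Set X) :
    Set (Delta F) :=
  {p | A ∈ p.1}

/-- The topology on `δX` having `{Â : A ⊆ X}` as a base. -/
instance (F : StarSubalgebra ℂ (BoundedContinuousFunction X ℂ)) :
    TopologicalSpace (Delta F) :=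
  TopologicalSpace.generateFrom {S | ∃ A : Set X, S = hatSet F A}

/-- For an `F`-filter `φ`, `φ̂ = {p ∈ δX : φ ⊆ p}`. -/
def hatF (F : StarSubalgebra ℂ (BoundedContinuousFunction X ℂ)) (φ : Set (Set X)) :
    Set (Delta F) :=
  {p | φ ⊆ p.1}

/-- `τ(F)`, the weakest topology on `X` making every member of `F` continuous. -/
noncomputable def tauF (F : StarSubalgebra ℂ (BoundedContinuousFunction X ℂ)) : TopologicalSpace X :=
  ⨅ f ∈ (F : Set (BoundedContinuousFunction X ℂ)),
    TopologicalSpace.induced (fun x => f x) inferInstance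

/-- `B(I) = {X(f,r) : f ∈ I, r > 0}` for an ideal `I` of `F`. -/
def BIdeal (F : StarSubalgebra ℂ (BoundedContinuousFunction X ℂ)) (I : Ideal F) :
    Set (Set X) :=
  {S | ∃ f ∈ I, ∃ r : ℝ, 0 < r ∧ S = XSet (f : BoundedContinuousFunction X ℂ) r}


/-! The substance is (ii): an `F`-filter `φ` is the intersection of the `F`-ultrafilters containing
it. Given `A ∉ φ`, Zorn's lemma gives an `F`-filter `m ⊇ φ` maximal among those avoiding `A`, and
`m` is an `F`-ultrafilter. Otherwise some `F`-filter `χ ⊇ m` contains `A`, hence some `B ∈ χ` and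
`f ∈ F` with `f = 0` on `B` and `f = 1` off `A`. Adjoining the sets `X(1 - f, r)` to `m` gives an
`F`-filter still avoiding `A`, so by maximality `X(1 - f, 1/2) ∈ m ⊆ χ`, a set disjoint from
`B ∈ χ`. That the enlarged filter is again an `F`-family needs separating functions that are exactly
`0` and `1` on prescribed sets; they are obtained by continuous functional calculus, which stays in
`F` because `F` is closed. The other parts follow formally. -/

open BoundedContinuousFunction

section
variable {X : Type*}

theorem IsSetFilter.univ_mem {φ : Set (Set X)} (hφ : IsSetFilter φ) : univ ∈ φ :=
  let ⟨C, hC⟩ := hφ.1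
  hφ.2.2.1 C hC univ (subset_univ C)

variable [TopologicalSpace X] {F : StarSubalgebra ℂ (X →ᵇ ℂ)}

theorem exists_mem_apply_eq_comp (hF : IsClosed (F : Set (X →ᵇ ℂ))) {k : X →ᵇ ℂ} (hk : k ∈ F)
    {θ : ℂ → ℂ} (hθ : Continuous θ) : ∃ u ∈ F, ∀ x, u x = θ (k x) := by
  refine ⟨cfc θ k, cfc_mem (hs := hF) θ hk, fun x => ?_⟩
  let ev : (X →ᵇ ℂ) →⋆ₐ[ℂ] ℂ := (ContinuousMap.evalStarAlgHom ℂ ℂ x).comp (toContinuousMapStarₐ ℂ)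
  have hev : ∀ f : X →ᵇ ℂ, ev f = f x := fun _ => rfl
  have := StarAlgHomClass.map_cfc ev θ k hθ.continuousOn (continuous_eval_const x)
  rwa [hev, hev, ← Algebra.algebraMap_self_apply (k x), cfc_algebraMap] at this

theorem exists_mem_eq_zero_eq_one (hF : IsClosed (F : Set (X →ᵇ ℂ))) {k : X →ᵇ ℂ} (hk : k ∈ F)
    {s r : ℝ} (hsr : s < r) :
    ∃ u ∈ F, (∀ x, ‖k x‖ ≤ s → u x = 0) ∧ ∀ x, r ≤ ‖k x‖ → u x = 1 := by
  set ramp : ℝ → ℝ := fun t => max 0 (min 1 ((t - s) / (r - s)))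
  have hrs : 0 < r - s := sub_pos.mpr hsr
  obtain ⟨u, huF, hu⟩ :=
    exists_mem_apply_eq_comp hF hk (θ := fun z => (ramp ‖z‖ : ℂ)) (by fun_prop)
  refine ⟨u, huF, fun x hx => ?_, fun x hx => ?_⟩
  · have : (‖k x‖ - s) / (r - s) ≤ 0 := div_nonpos_of_nonpos_of_nonneg (by linarith) hrs.le
    simp [hu, ramp, min_le_of_right_le this]
  · have : 1 ≤ (‖k x‖ - s) / (r - s) := (one_le_div hrs).mpr (by linarith)
    simp [hu, ramp, min_eq_left this]

variable (F) in
/-- `FFamily F 𝒜` says that every member `A ≠ X` of `𝒜` is `F`-separated from some member. -/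
def FSeparated (S T : Set X) : Prop :=
  ∃ f ∈ F, (∀ x ∈ S, f x = 0) ∧ ∀ x ∉ T, f x = 1

theorem FSeparated.mono {S S' T T' : Set X} (h : FSeparated F S T) (hS : S' ⊆ S) (hT : T ⊆ T') :
    FSeparated F S' T' :=
  let ⟨f, hf, h0, h1⟩ := h
  ⟨f, hf, fun x hx => h0 x (hS hx), fun x hx => h1 x (fun h => hx (hT h))⟩

theorem fSeparated_XSet (hF : IsClosed (F : Set (X →ᵇ ℂ))) {g : X →ᵇ ℂ} (hg : g ∈ F) {s r : ℝ}
    (hsr : s < r) : FSeparated F (XSet g s) (XSet g r) :=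
  let ⟨u, huF, hu0, hu1⟩ := exists_mem_eq_zero_eq_one hF hg hsr
  ⟨u, huF, hu0, fun x hx => hu1 x (not_le.mp hx).le⟩

theorem FSeparated.inter (hF : IsClosed (F : Set (X →ᵇ ℂ))) {S₁ T₁ S₂ T₂ : Set X}
    (h₁ : FSeparated F S₁ T₁) (h₂ : FSeparated F S₂ T₂) : FSeparated F (S₁ ∩ S₂) (T₁ ∩ T₂) := by
  obtain ⟨f₁, hf₁, h₁0, h₁1⟩ := h₁
  obtain ⟨f₂, hf₂, h₂0, h₂1⟩ := h₂
  -- `k = |f₁|² + |f₂|²` vanishes on `S₁ ∩ S₂` and is `≥ 1` off `T₁ ∩ T₂`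
  set k := star f₁ * f₁ + star f₂ * f₂
  have hkF : k ∈ F := add_mem (mul_mem (star_mem hf₁) hf₁) (mul_mem (star_mem hf₂) hf₂)
  have hk : ∀ x, ‖k x‖ = ‖f₁ x‖ ^ 2 + ‖f₂ x‖ ^ 2 := fun x => by
    have : k x = ((‖f₁ x‖ ^ 2 + ‖f₂ x‖ ^ 2 : ℝ) : ℂ) := by
      simp [k, Complex.conj_mul']
    rw [this, Complex.norm_real, Real.norm_of_nonneg (by positivity)]
  obtain ⟨u, huF, hu0, hu1⟩ := exists_mem_eq_zero_eq_one hF hkF zero_lt_one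
  refine ⟨u, huF, fun x ⟨hx₁, hx₂⟩ => hu0 x (by simp [hk, h₁0 x hx₁, h₂0 x hx₂]), fun x hx => ?_⟩
  apply hu1
  rcases not_and_or.mp hx with hx | hx
  · simp [hk, h₁1 x hx]
  · simp [hk, h₂1 x hx]

theorem FFilter.exists_fSeparated {φ : Set (Set X)} (hφ : FFilter F φ) {C : Set X} (hC : C ∈ φ) :
    ∃ B ∈ φ, FSeparated F B C := by
  by_cases hCu : C = univ
  · exact ⟨univ, hφ.1.univ_mem, 0, zero_mem F, fun _ _ => rfl, by simp [hCu]⟩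
  · exact hφ.2.2.2 C hC hCu

def adjoinXSets (φ : Set (Set X)) (g : X →ᵇ ℂ) : Set (Set X) :=
  {A | ∃ C ∈ φ, ∃ r : ℝ, 0 < r ∧ C ∩ XSet g r ⊆ A}

theorem subset_adjoinXSets (φ : Set (Set X)) (g : X →ᵇ ℂ) : φ ⊆ adjoinXSets φ g :=
  fun C hC => ⟨C, hC, 1, one_pos, inter_subset_left⟩

theorem XSet_mem_adjoinXSets {φ : Set (Set X)} (hφ : IsSetFilter φ) (g : X →ᵇ ℂ) {r : ℝ}
    (hr : 0 < r) : XSet g r ∈ adjoinXSets φ g :=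
  ⟨univ, hφ.univ_mem, r, hr, inter_subset_right⟩

theorem isSetFilter_adjoinXSets {φ : Set (Set X)} (hφ : IsSetFilter φ) {g : X →ᵇ ℂ}
    (hne : ∀ C ∈ φ, ∀ r : ℝ, 0 < r → (C ∩ XSet g r).Nonempty) :
    IsSetFilter (adjoinXSets φ g) := by
  refine ⟨⟨univ, subset_adjoinXSets φ g hφ.univ_mem⟩, ?_, ?_, ?_⟩
  · rintro A ⟨C, hC, r, hr, hCA⟩ B ⟨D, hD, s, hs, hDB⟩
    refine ⟨C ∩ D, hφ.2.1 C hC D hD, min r s, lt_min hr hs, fun x ⟨⟨hxC, hxD⟩, hxg⟩ => ?_⟩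
    have hxg : ‖g x‖ ≤ min r s := hxg
    exact ⟨hCA ⟨hxC, hxg.trans (min_le_left r s)⟩, hDB ⟨hxD, hxg.trans (min_le_right r s)⟩⟩
  · rintro A ⟨C, hC, r, hr, hCA⟩ B hAB
    exact ⟨C, hC, r, hr, hCA.trans hAB⟩
  · rintro ⟨C, hC, r, hr, hC0⟩
    exact (hne C hC r hr).ne_empty (subset_empty_iff.mp hC0)

theorem fFilter_adjoinXSets (hF : IsClosed (F : Set (X →ᵇ ℂ))) {φ : Set (Set X)}
    (hφ : FFilter F φ) {g : X →ᵇ ℂ} (hg : g ∈ F)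
    (hne : ∀ C ∈ φ, ∀ r : ℝ, 0 < r → (C ∩ XSet g r).Nonempty) :
    FFilter F (adjoinXSets φ g) := by
  refine ⟨isSetFilter_adjoinXSets hφ.1 hne, ⟨univ, subset_adjoinXSets φ g hφ.1.univ_mem⟩, ?_, ?_⟩
  · rintro A ⟨C, hC, r, hr, hCA⟩
    exact (hne C hC r hr).mono hCA
  · rintro A ⟨C, hC, r, hr, hCA⟩ -
    obtain ⟨B, hB, hBC⟩ := hφ.exists_fSeparated hC
    refine ⟨B ∩ XSet g (r / 2), ⟨B, hB, r / 2, half_pos hr, subset_rfl⟩, ?_⟩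
    exact (hBC.inter hF (fSeparated_XSet hF hg (half_lt_self hr))).mono subset_rfl hCA

theorem FFilter.sUnion_of_isChain {c : Set (Set (Set X))} (hc : IsChain (· ⊆ ·) c)
    (hcne : c.Nonempty) (hcF : ∀ ψ ∈ c, FFilter F ψ) : FFilter F (⋃₀ c) := by
  obtain ⟨ψ₀, hψ₀⟩ := hcne
  have hsub : ∀ ψ ∈ c, ψ ⊆ ⋃₀ c := fun ψ hψ => subset_sUnion_of_mem hψ
  have huniv : univ ∈ ⋃₀ c := hsub ψ₀ hψ₀ (hcF ψ₀ hψ₀).1.univ_mem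
  refine ⟨⟨⟨univ, huniv⟩, ?_, ?_, ?_⟩, ⟨univ, huniv⟩, ?_, ?_⟩
  · rintro A ⟨ψ₁, hψ₁, hA⟩ B ⟨ψ₂, hψ₂, hB⟩
    rcases hc.total hψ₁ hψ₂ with h | h
    · exact hsub ψ₂ hψ₂ ((hcF ψ₂ hψ₂).1.2.1 A (h hA) B hB)
    · exact hsub ψ₁ hψ₁ ((hcF ψ₁ hψ₁).1.2.1 A hA B (h hB))
  · rintro A ⟨ψ, hψ, hA⟩ B hAB
    exact hsub ψ hψ ((hcF ψ hψ).1.2.2.1 A hA B hAB)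
  · rintro ⟨ψ, hψ, h⟩
    exact (hcF ψ hψ).1.2.2.2 h
  · rintro A ⟨ψ, hψ, hA⟩
    exact (hcF ψ hψ).2.2.1 A hA
  · rintro A ⟨ψ, hψ, hA⟩ hAu
    obtain ⟨B, hB, hBA⟩ := (hcF ψ hψ).2.2.2 A hA hAu
    exact ⟨B, hsub ψ hψ hB, hBA⟩

theorem FFilter.fUltrafilter_of_maximal (hF : IsClosed (F : Set (X →ᵇ ℂ))) {m : Set (Set X)}
    (hm : FFilter F m) {A : Set X} (hAm : A ∉ m)
    (hmax : ∀ χ, FFilter F χ → m ⊆ χ → A ∉ χ → χ ⊆ m) : FUltrafilter F m := by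
  refine ⟨hm, fun χ hχ hmχ => subset_antisymm (hmax χ hχ hmχ fun hAχ => ?_) hmχ⟩
  have hAu : A ≠ univ := fun h => hAm (h ▸ hm.1.univ_mem)
  obtain ⟨B, hBχ, f, hf, hf0, hf1⟩ := hχ.2.2.2 A hAχ hAu
  -- `g = 1 - f` is `1` on `B ∈ χ` and `0` off `A`, which meets every member of `m`
  set g := 1 - f
  have hg0 : ∀ x ∉ A, g x = 0 := fun x hx => by simp [g, hf1 x hx]
  have hmeet : ∀ C ∈ m, ∃ x ∈ C, x ∉ A := fun C hC =>
    not_subset.mp fun hCA => hAm (hm.1.2.2.1 C hC A hCA)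
  have hgr : ∀ x ∉ A, ∀ r : ℝ, 0 < r → x ∈ XSet g r := fun x hx r hr => by
    simp [XSet, hg0 x hx, hr.le]
  have hne : ∀ C ∈ m, ∀ r : ℝ, 0 < r → (C ∩ XSet g r).Nonempty := fun C hC r hr =>
    let ⟨x, hxC, hxA⟩ := hmeet C hC
    ⟨x, hxC, hgr x hxA r hr⟩
  have hA' : A ∉ adjoinXSets m g := fun ⟨C, hC, r, hr, hCA⟩ =>
    let ⟨x, hxC, hxA⟩ := hmeet C hC
    hxA (hCA ⟨hxC, hgr x hxA r hr⟩)
  have hext := hmax _ (fFilter_adjoinXSets hF hm (sub_mem (one_mem F) hf) hne)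
    (subset_adjoinXSets m g) hA'
  have hBg : B ∩ XSet g (1 / 2) ∈ χ :=
    hχ.1.2.1 B hBχ _ (hmχ (hext (XSet_mem_adjoinXSets hm.1 g one_half_pos)))
  obtain ⟨x, hxB, hxg⟩ := hχ.2.2.1 _ hBg
  have : ‖g x‖ ≤ 1 / 2 := hxg
  norm_num [g, hf0 x hxB] at this

theorem FFilter.exists_fUltrafilter_not_mem (hF : IsClosed (F : Set (X →ᵇ ℂ)))
    {φ : Set (Set X)} (hφ : FFilter F φ) {A : Set X} (hA : A ∉ φ) :
    ∃ p, FUltrafilter F p ∧ φ ⊆ p ∧ A ∉ p := by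
  let S := {ψ | FFilter F ψ ∧ φ ⊆ ψ ∧ A ∉ ψ}
  have hchain : ∀ c ⊆ S, IsChain (· ⊆ ·) c → c.Nonempty → ∃ ub ∈ S, ∀ s ∈ c, s ⊆ ub := by
    rintro c hcS hc ⟨ψ, hψ⟩
    refine ⟨⋃₀ c, ⟨.sUnion_of_isChain hc ⟨ψ, hψ⟩ fun χ hχ => (hcS hχ).1, ?_, ?_⟩,
      fun _ => subset_sUnion_of_mem⟩
    · exact (hcS hψ).2.1.trans (subset_sUnion_of_mem hψ)
    · exact fun ⟨χ, hχ, hAχ⟩ => (hcS hχ).2.2 hAχ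
  obtain ⟨m, hφm, ⟨hm, -, hAm⟩, hmax⟩ := zorn_subset_nonempty S hchain φ ⟨hφ, subset_rfl, hA⟩
  exact ⟨m, hm.fUltrafilter_of_maximal hF hAm fun χ hχ hmχ hAχ =>
    hmax ⟨hχ, hφm.trans hmχ, hAχ⟩ hmχ, hφm, hAm⟩

theorem FFilter.mem_iff_forall_mem_hatF (hF : IsClosed (F : Set (X →ᵇ ℂ))) {φ : Set (Set X)}
    (hφ : FFilter F φ) (A : Set X) : A ∈ φ ↔ ∀ p ∈ hatF F φ, A ∈ p.1 := by
  refine ⟨fun hA p hp => hp hA, fun h => by_contra fun hA => ?_⟩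
  obtain ⟨p, hp, hφp, hAp⟩ := hφ.exists_fUltrafilter_not_mem hF hA
  exact hAp (h ⟨p, hp⟩ hφp)

theorem FFilter.hatF_subset_hatF_iff (hF : IsClosed (F : Set (X →ᵇ ℂ))) {φ ψ : Set (Set X)}
    (hψ : FFilter F ψ) : hatF F ψ ⊆ hatF F φ ↔ φ ⊆ ψ :=
  ⟨fun h A hA => (hψ.mem_iff_forall_mem_hatF hF A).mpr fun _ hp => h hp hA,
    fun h _ hp => h.trans hp⟩

end

theorem stmt5 (F : StarSubalgebra ℂ (BoundedContinuousFunction X ℂ)) (hF : IsClosed (F : Set (BoundedContinuousFunction X ℂ)))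
    (φ ψ : Set (Set X)) (hφ : FFilter F φ) (hψ : FFilter F ψ) :
    hatF F φ = ⋂ A ∈ φ, hatSet F A ∧
    φ = ⋂ p ∈ hatF F φ, (p : Delta F).1 ∧
    (φ ⊆ ψ ↔ hatF F ψ ⊆ hatF F φ) ∧
    (φ = ψ ↔ hatF F φ = hatF F ψ) := by
  have hsub : φ ⊆ ψ ↔ hatF F ψ ⊆ hatF F φ := (hψ.hatF_subset_hatF_iff hF).symm
  refine ⟨?_, ?_, hsub, ?_⟩
  · ext p
    simp [hatF, hatSet, subset_def]
  · ext A
    simpa using hφ.mem_iff_forall_mem_hatF hF A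
  · refine ⟨fun h => h ▸ rfl, fun h => subset_antisymm (hsub.mpr h.ge) ?_⟩
    exact (hφ.hatF_subset_hatF_iff hF).mp h.le
end

section
/- Let A and B be non-empty subsets of X. Then X(f,r) ∩ X(g,r) ≠ ∅ for all f ∈ Z(A), g ∈ Z(B), and r > 0 if and only if the closures of e(A) and of e(B) in δX have non-empty intersection. -/
/-!
An `F`-ultrafilter `p` lies in the closure of `e(A)` iff `X(k, r) ∈ p` for all `k ∈ Z(A)` and
`r > 0`. If `p` is in the closure, adjoining the sets `X(k, r)` to `p` still gives an `F`-filter,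
because the continuous functional calculus of the closed algebra `F` provides functions separating
`X(k, r/2)` from `X(k, r)`; by maximality these sets are already in `p`. Conversely, for `C ∈ p`
take `D ∈ p` and `u ∈ F` separating `D` from `C`; then `|u| < 1` at some point of `A`, and the
`τ(F)`-neighbourhood `{|u| < 1}` of that point lies in `C`.

Hence a common point of the two closures contains every `X(f, r) ∩ X(g, r)`, which is therefore
non-empty; and if all these sets are non-empty they form the base of an `F`-filter (directed via
`|f₁|² + |f₂|²`), and an `F`-ultrafilter containing it lies in both closures.
-/

open Set

variable {X : Type*} [Nonempty X] [TopologicalSpace X] [DiscreteTopology X]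

open scoped BoundedContinuousFunction Topology

section

variable {X : Type*} [TopologicalSpace X]

@[simps]
noncomputable def BoundedContinuousFunction.evalStarAlgHom (x : X) :
    (X →ᵇ ℂ) →⋆ₐ[ℂ] ℂ where
  toFun f := f x
  map_one' := rfl
  map_mul' _ _ := rfl
  map_zero' := rfl
  map_add' _ _ := rfl
  commutes' _ := rfl
  map_star' _ := rfl

lemma BoundedContinuousFunction.cfc_apply {χ : ℂ → ℂ} (hχ : Continuous χ) (f : X →ᵇ ℂ)
    (x : X) : cfc χ f x = χ (f x) := by
  have h := (evalStarAlgHom x).map_cfc χ f (hφ := (evalCLM ℂ x).continuous)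
  simp only [evalStarAlgHom_apply] at h
  rw [h]
  simpa using cfc_algebraMap (A := ℂ) (f x) χ

noncomputable def ramp (s r : ℝ) (z : ℂ) : ℂ :=
  ((max 0 (min 1 ((‖z‖ - s) / (r - s))) : ℝ) : ℂ)

lemma continuous_ramp (s r : ℝ) : Continuous (ramp s r) := by
  unfold ramp; fun_prop

lemma ramp_of_norm_le {s r : ℝ} (hsr : s < r) {z : ℂ} (hz : ‖z‖ ≤ s) : ramp s r z = 0 := by
  have : (‖z‖ - s) / (r - s) ≤ 0 := div_nonpos_of_nonpos_of_nonneg (by linarith) (by linarith)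
  simp [ramp, min_le_of_right_le this]

lemma ramp_of_le_norm {s r : ℝ} (hsr : s < r) {z : ℂ} (hz : r ≤ ‖z‖) : ramp s r z = 1 := by
  have : 1 ≤ (‖z‖ - s) / (r - s) := (one_le_div (by linarith)).2 (by linarith)
  simp [ramp, min_eq_left this]

variable {F : StarSubalgebra ℂ (X →ᵇ ℂ)}

-- The relation between `B` and `A` in the definition of an `F`-family.
def FSeparates (F : StarSubalgebra ℂ (X →ᵇ ℂ)) (S T : Set X) : Prop :=
  ∃ f ∈ F, (∀ x ∈ S, f x = 0) ∧ ∀ x ∉ T, f x = 1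

namespace FSeparates

lemma univ : FSeparates F Set.univ Set.univ :=
  ⟨0, zero_mem F, fun _ _ => rfl, fun _ hx => (hx trivial).elim⟩

lemma mono {S S' T T' : Set X} (h : FSeparates F S T) (hS : S' ⊆ S) (hT : T ⊆ T') :
    FSeparates F S' T' :=
  let ⟨f, hf, h0, h1⟩ := h
  ⟨f, hf, fun x hx => h0 x (hS hx), fun x hx => h1 x fun hxT => hx (hT hxT)⟩

-- `a + b - a b = 1 - (1 - a) (1 - b)` vanishes where both vanish and is `1` where either is.
lemma inter {S₁ S₂ T₁ T₂ : Set X} (h₁ : FSeparates F S₁ T₁) (h₂ : FSeparates F S₂ T₂) :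
    FSeparates F (S₁ ∩ S₂) (T₁ ∩ T₂) := by
  obtain ⟨a, ha, ha0, ha1⟩ := h₁
  obtain ⟨b, hb, hb0, hb1⟩ := h₂
  refine ⟨a + b - a * b, sub_mem (add_mem ha hb) (mul_mem ha hb), fun x hx => ?_, fun x hx => ?_⟩
  · simp [ha0 x hx.1, hb0 x hx.2]
  · rcases not_and_or.mp hx with hx | hx
    · simp [ha1 x hx]
    · simp [hb1 x hx]

end FSeparates

lemma XSet_mono (f : X →ᵇ ℂ) {s r : ℝ} (hsr : s ≤ r) : XSet f s ⊆ XSet f r :=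
  fun _ hx => le_trans hx hsr

lemma fSeparates_XSet (hF : IsClosed (F : Set (X →ᵇ ℂ))) {f : X →ᵇ ℂ} (hf : f ∈ F)
    {s r : ℝ} (hsr : s < r) : FSeparates F (XSet f s) (XSet f r) := by
  refine ⟨cfc (ramp s r) f, cfc_mem (hs := hF) _ hf, fun x hx => ?_, fun x hx => ?_⟩
  · rw [BoundedContinuousFunction.cfc_apply (continuous_ramp s r)]
    exact ramp_of_norm_le hsr hx
  · rw [BoundedContinuousFunction.cfc_apply (continuous_ramp s r)]
    exact ramp_of_le_norm hsr (le_of_lt (not_le.mp hx))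

namespace FFilter

variable {p : Set (Set X)}

lemma mem_of_superset (hp : FFilter F p) {C D : Set X} (hC : C ∈ p) (hCD : C ⊆ D) : D ∈ p :=
  hp.1.2.2.1 C hC D hCD

lemma univ_mem (hp : FFilter F p) : Set.univ ∈ p :=
  let ⟨_, hC⟩ := hp.1.1
  hp.mem_of_superset hC (Set.subset_univ _)

lemma inter_mem (hp : FFilter F p) {C D : Set X} (hC : C ∈ p) (hD : D ∈ p) : C ∩ D ∈ p :=
  hp.1.2.1 C hC D hD

lemma nonempty_of_mem (hp : FFilter F p) {C : Set X} (hC : C ∈ p) : C.Nonempty :=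
  hp.2.2.1 C hC

lemma exists_fSeparates (hp : FFilter F p) {C : Set X} (hC : C ∈ p) :
    ∃ D ∈ p, FSeparates F D C := by
  by_cases hCuniv : C = Set.univ
  · subst hCuniv
    exact ⟨Set.univ, hp.univ_mem, FSeparates.univ⟩
  · exact hp.2.2.2 C hC hCuniv

end FFilter

lemma fFilter_genFilter {ℬ : Set (Set X)} (hℬ : IsFilterBase ℬ)
    (hsep : ∀ T ∈ ℬ, ∃ T' ∈ ℬ, FSeparates F T' T) : FFilter F (genFilter ℬ) := by
  obtain ⟨⟨T₀, hT₀⟩, hempty, hdir⟩ := hℬ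
  have hne : ∀ A ∈ genFilter ℬ, A.Nonempty := by
    rintro A ⟨T, hT, hTA⟩
    exact (Set.nonempty_iff_ne_empty.mpr fun h => hempty (h ▸ hT)).mono hTA
  have hmem : (genFilter ℬ).Nonempty := ⟨T₀, T₀, hT₀, subset_rfl⟩
  refine ⟨⟨hmem, ?_, ?_, fun h => (hne ∅ h).ne_empty rfl⟩, hmem, hne, ?_⟩
  · rintro A ⟨T₁, hT₁, hTA⟩ B ⟨T₂, hT₂, hTB⟩
    obtain ⟨T, hT, hTsub⟩ := hdir T₁ hT₁ T₂ hT₂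
    exact ⟨T, hT, hTsub.trans (Set.inter_subset_inter hTA hTB)⟩
  · rintro A ⟨T, hT, hTA⟩ B hAB
    exact ⟨T, hT, hTA.trans hAB⟩
  · rintro A ⟨T, hT, hTA⟩ -
    obtain ⟨T', hT', hsepT⟩ := hsep T hT
    exact ⟨T', ⟨T', hT', subset_rfl⟩, hsepT.mono subset_rfl hTA⟩

lemma fFilter_sUnion_of_isChain {c : Set (Set (Set X))} (hc : ∀ ψ ∈ c, FFilter F ψ)
    (hchain : IsChain (· ⊆ ·) c) (hne : c.Nonempty) : FFilter F (⋃₀ c) := by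
  obtain ⟨ψ₀, hψ₀⟩ := hne
  have huniv : Set.univ ∈ ⋃₀ c := ⟨ψ₀, hψ₀, (hc ψ₀ hψ₀).univ_mem⟩
  refine ⟨⟨⟨_, huniv⟩, ?_, ?_, ?_⟩, ⟨_, huniv⟩, ?_, ?_⟩
  · rintro A ⟨ψ₁, hψ₁, hA⟩ B ⟨ψ₂, hψ₂, hB⟩
    rcases hchain.total hψ₁ hψ₂ with h | h
    · exact ⟨ψ₂, hψ₂, (hc ψ₂ hψ₂).inter_mem (h hA) hB⟩
    · exact ⟨ψ₁, hψ₁, (hc ψ₁ hψ₁).inter_mem hA (h hB)⟩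
  · rintro A ⟨ψ, hψ, hA⟩ B hAB
    exact ⟨ψ, hψ, (hc ψ hψ).mem_of_superset hA hAB⟩
  · rintro ⟨ψ, hψ, h⟩
    exact Set.not_nonempty_empty ((hc ψ hψ).nonempty_of_mem h)
  · rintro A ⟨ψ, hψ, hA⟩
    exact (hc ψ hψ).nonempty_of_mem hA
  · rintro A ⟨ψ, hψ, hA⟩ hAuniv
    obtain ⟨B, hB, hsepB⟩ := (hc ψ hψ).2.2.2 A hA hAuniv
    exact ⟨B, ⟨ψ, hψ, hB⟩, hsepB⟩

lemma exists_fUltrafilter_superset {φ : Set (Set X)} (hφ : FFilter F φ) :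
    ∃ p, FUltrafilter F p ∧ φ ⊆ p := by
  obtain ⟨p, hφp, hp⟩ := zorn_subset_nonempty {ψ | FFilter F ψ}
    (fun c hc hchain hne => ⟨⋃₀ c, fFilter_sUnion_of_isChain hc hchain hne,
      fun _ => Set.subset_sUnion_of_mem⟩) φ hφ
  exact ⟨p, ⟨hp.1, fun ψ hψ hpψ => (hp.2 hψ hpψ).antisymm hpψ⟩, hφp⟩

lemma FUltrafilter.XSet_mem (hF : IsClosed (F : Set (X →ᵇ ℂ))) {p : Set (Set X)}
    (hp : FUltrafilter F p) {f : X →ᵇ ℂ} (hf : f ∈ F)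
    (hmeet : ∀ C ∈ p, ∀ s, 0 < s → (C ∩ XSet f s).Nonempty) {r : ℝ} (hr : 0 < r) :
    XSet f r ∈ p := by
  set ℬ := {T | ∃ C ∈ p, ∃ s, 0 < s ∧ T = C ∩ XSet f s}
  have hbase : IsFilterBase ℬ := by
    refine ⟨⟨_, Set.univ, hp.1.univ_mem, 1, one_pos, rfl⟩, ?_, ?_⟩
    · rintro ⟨C, hC, s, hs, h⟩
      exact (hmeet C hC s hs).ne_empty h.symm
    · rintro _ ⟨C₁, hC₁, s₁, hs₁, rfl⟩ _ ⟨C₂, hC₂, s₂, hs₂, rfl⟩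
      refine ⟨_, ⟨C₁ ∩ C₂, hp.1.inter_mem hC₁ hC₂, min s₁ s₂, lt_min hs₁ hs₂, rfl⟩, ?_⟩
      rintro x ⟨⟨hx₁, hx₂⟩, hxs⟩
      exact ⟨⟨hx₁, XSet_mono f (min_le_left _ _) hxs⟩,
        ⟨hx₂, XSet_mono f (min_le_right _ _) hxs⟩⟩
  have hsep : ∀ T ∈ ℬ, ∃ T' ∈ ℬ, FSeparates F T' T := by
    rintro _ ⟨C, hC, s, hs, rfl⟩
    obtain ⟨D, hD, hDC⟩ := hp.1.exists_fSeparates hC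
    exact ⟨_, ⟨D, hD, s / 2, half_pos hs, rfl⟩,
      hDC.inter (fSeparates_XSet hF hf (half_lt_self hs))⟩
  have hpℬ : p ⊆ genFilter ℬ := fun C hC =>
    ⟨_, ⟨C, hC, 1, one_pos, rfl⟩, Set.inter_subset_left⟩
  rw [← hp.2 _ (fFilter_genFilter hbase hsep) hpℬ]
  exact ⟨_, ⟨Set.univ, hp.1.univ_mem, r, hr, rfl⟩, Set.inter_subset_right⟩

lemma norm_star_mul_add_star_mul_apply (f g : X →ᵇ ℂ) (x : X) :
    ‖(star f * f + star g * g) x‖ = ‖f x‖ ^ 2 + ‖g x‖ ^ 2 := by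
  have : (star f * f + star g * g) x = ((‖f x‖ ^ 2 + ‖g x‖ ^ 2 : ℝ) : ℂ) := by
    simp [Complex.conj_mul']
  rw [this, Complex.norm_real, Real.norm_of_nonneg (by positivity)]

lemma XSet_star_mul_add_star_mul_subset (f g : X →ᵇ ℂ) {r : ℝ} (hr : 0 ≤ r) :
    XSet (star f * f + star g * g) (r ^ 2) ⊆ XSet f r ∩ XSet g r := by
  intro x hx
  have hx : ‖f x‖ ^ 2 + ‖g x‖ ^ 2 ≤ r ^ 2 :=
    (norm_star_mul_add_star_mul_apply f g x).symm.trans_le hx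
  exact ⟨(sq_le_sq₀ (norm_nonneg _) hr).1 (by linarith [sq_nonneg ‖g x‖]),
    (sq_le_sq₀ (norm_nonneg _) hr).1 (by linarith [sq_nonneg ‖f x‖])⟩

lemma star_mul_add_star_mul_mem_ZSet {A : Set X} {f g : X →ᵇ ℂ} (hf : f ∈ ZSet F A)
    (hg : g ∈ ZSet F A) : star f * f + star g * g ∈ ZSet F A :=
  ⟨add_mem (mul_mem (star_mem hf.1) hf.1) (mul_mem (star_mem hg.1) hg.1), fun x hx => by
    simp [hf.2 x hx, hg.2 x hx]⟩

lemma zero_mem_ZSet (A : Set X) : (0 : X →ᵇ ℂ) ∈ ZSet F A :=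
  ⟨zero_mem F, fun _ _ => rfl⟩

lemma exists_fUltrafilter_XSet_mem (hF : IsClosed (F : Set (X →ᵇ ℂ))) {A B : Set X}
    (H : ∀ f ∈ ZSet F A, ∀ g ∈ ZSet F B, ∀ r, 0 < r → (XSet f r ∩ XSet g r).Nonempty) :
    ∃ p : Delta F, (∀ f ∈ ZSet F A, ∀ r, 0 < r → XSet f r ∈ p.1) ∧
      ∀ g ∈ ZSet F B, ∀ r, 0 < r → XSet g r ∈ p.1 := by
  set ℬ := {T | ∃ f ∈ ZSet F A, ∃ g ∈ ZSet F B, ∃ r, 0 < r ∧ T = XSet f r ∩ XSet g r}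
  have hmem : ∀ f ∈ ZSet F A, ∀ g ∈ ZSet F B, ∀ r, 0 < r → XSet f r ∩ XSet g r ∈ genFilter ℬ :=
    fun f hf g hg r hr => ⟨_, ⟨f, hf, g, hg, r, hr, rfl⟩, subset_rfl⟩
  have hbase : IsFilterBase ℬ := by
    refine ⟨⟨_, 0, zero_mem_ZSet A, 0, zero_mem_ZSet B, 1, one_pos, rfl⟩, ?_, ?_⟩
    · rintro ⟨f, hf, g, hg, r, hr, h⟩
      exact (H f hf g hg r hr).ne_empty h.symm
    · rintro _ ⟨f₁, hf₁, g₁, hg₁, r₁, hr₁, rfl⟩ _ ⟨f₂, hf₂, g₂, hg₂, r₂, hr₂, rfl⟩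
      set m := min r₁ r₂
      have hm : 0 < m := lt_min hr₁ hr₂
      refine ⟨_, ⟨_, star_mul_add_star_mul_mem_ZSet hf₁ hf₂, _,
        star_mul_add_star_mul_mem_ZSet hg₁ hg₂, m ^ 2, pow_pos hm 2, rfl⟩, ?_⟩
      rintro x ⟨hfx, hgx⟩
      obtain ⟨hf₁x, hf₂x⟩ := XSet_star_mul_add_star_mul_subset f₁ f₂ hm.le hfx
      obtain ⟨hg₁x, hg₂x⟩ := XSet_star_mul_add_star_mul_subset g₁ g₂ hm.le hgx
      exact ⟨⟨XSet_mono _ (min_le_left _ _) hf₁x, XSet_mono _ (min_le_left _ _) hg₁x⟩,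
        XSet_mono _ (min_le_right _ _) hf₂x, XSet_mono _ (min_le_right _ _) hg₂x⟩
  have hsep : ∀ T ∈ ℬ, ∃ T' ∈ ℬ, FSeparates F T' T := by
    rintro _ ⟨f, hf, g, hg, r, hr, rfl⟩
    exact ⟨_, ⟨f, hf, g, hg, r / 2, half_pos hr, rfl⟩,
      (fSeparates_XSet hF hf.1 (half_lt_self hr)).inter
        (fSeparates_XSet hF hg.1 (half_lt_self hr))⟩
  obtain ⟨p, hp, hℬp⟩ := exists_fUltrafilter_superset (fFilter_genFilter hbase hsep)
  refine ⟨⟨p, hp⟩, fun f hf r hr => ?_, fun g hg r hr => ?_⟩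
  · exact hp.1.mem_of_superset (hℬp (hmem f hf 0 (zero_mem_ZSet B) r hr)) Set.inter_subset_left
  · exact hp.1.mem_of_superset (hℬp (hmem 0 (zero_mem_ZSet A) g hg r hr)) Set.inter_subset_right

lemma isTopologicalBasis_hatSet :
    TopologicalSpace.IsTopologicalBasis {S : Set (Delta F) | ∃ A : Set X, S = hatSet F A} where
  exists_subset_inter := by
    rintro _ ⟨C, rfl⟩ _ ⟨D, rfl⟩ p ⟨hC, hD⟩
    exact ⟨hatSet F (C ∩ D), ⟨C ∩ D, rfl⟩, p.2.1.inter_mem hC hD, fun q hq =>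
      ⟨q.2.1.mem_of_superset hq Set.inter_subset_left,
        q.2.1.mem_of_superset hq Set.inter_subset_right⟩⟩
  sUnion_eq := Set.eq_univ_of_forall fun p => ⟨_, ⟨Set.univ, rfl⟩, p.2.1.univ_mem⟩
  eq_generateFrom := rfl

lemma continuous_tauF {f : X →ᵇ ℂ} (hf : f ∈ F) : Continuous[tauF F, inferInstance] f :=
  continuous_iff_le_induced.mpr (iInf₂_le f hf)

lemma setOf_norm_lt_mem_nhds_tauF {f : X →ᵇ ℂ} (hf : f ∈ F) {x : X} {r : ℝ} (hx : ‖f x‖ < r) :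
    {y | ‖f y‖ < r} ∈ @nhds X (tauF F) x :=
  @IsOpen.mem_nhds X (tauF F) _ _
    (@Continuous.isOpen_preimage X ℝ (tauF F) _ _
      (@Continuous.comp X ℂ ℝ (tauF F) _ _ _ _ continuous_norm (continuous_tauF hf)) _ isOpen_Iio)
    hx

lemma mem_closure_image_iff {e : X → Delta F}
    (he : ∀ x : X, (e x).1 = {A : Set X | A ∈ @nhds X (tauF F) x})
    {A : Set X} {p : Delta F} :
    p ∈ closure (e '' A) ↔ ∀ C ∈ p.1, ∃ x ∈ A, C ∈ @nhds X (tauF F) x := by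
  rw [isTopologicalBasis_hatSet.mem_closure_iff]
  constructor
  · intro h C hC
    obtain ⟨_, hq, x, hx, rfl⟩ := h _ ⟨C, rfl⟩ hC
    exact ⟨x, hx, by simpa [hatSet, he] using hq⟩
  · rintro h _ ⟨C, rfl⟩ hC
    obtain ⟨x, hx, hCx⟩ := h C hC
    exact ⟨e x, by simpa [hatSet, he] using hCx, x, hx, rfl⟩

lemma mem_closure_image_iff_XSet_mem (hF : IsClosed (F : Set (X →ᵇ ℂ))) {e : X → Delta F}
    (he : ∀ x : X, (e x).1 = {A : Set X | A ∈ @nhds X (tauF F) x})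
    {A : Set X} {p : Delta F} :
    p ∈ closure (e '' A) ↔ ∀ k ∈ ZSet F A, ∀ r, 0 < r → XSet k r ∈ p.1 := by
  rw [mem_closure_image_iff he]
  constructor
  · refine fun h k hk r hr => p.2.XSet_mem hF hk.1 (fun C hC s hs => ?_) hr
    obtain ⟨x, hxA, hCx⟩ := h C hC
    exact ⟨x, @mem_of_mem_nhds X (tauF F) x C hCx, by simp [XSet, hk.2 x hxA, hs.le]⟩
  · intro h C hC
    obtain ⟨D, hD, u, hu, hu0, hu1⟩ := p.2.1.exists_fSeparates hC
    -- If `‖u‖ ≥ 1` on `A`, a cutoff `v` of `u` gives `1 - v ∈ Z(A)` equal to `1` on `D`.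
    have : ∃ x ∈ A, ‖u x‖ < 1 := by
      by_contra! hA
      obtain ⟨v, hv, hv0, hv1⟩ := fSeparates_XSet hF hu (by norm_num : (0 : ℝ) < 1 / 2)
      have hZ : 1 - v ∈ ZSet F A := by
        refine ⟨sub_mem (one_mem F) hv, fun x hx => ?_⟩
        have : x ∉ XSet u (1 / 2) := fun hxu => by
          have := (hA x hx).trans hxu
          norm_num at this
        simp [hv1 x this]
      obtain ⟨y, hyD, hy⟩ := p.2.1.nonempty_of_mem (p.2.1.inter_mem hD (h _ hZ _ one_half_pos))
      have : ‖(1 - v) y‖ ≤ 1 / 2 := hy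
      norm_num [hv0 y (by simp [XSet, hu0 y hyD])] at this
    obtain ⟨x, hxA, hx⟩ := this
    refine ⟨x, hxA, Filter.mem_of_superset (setOf_norm_lt_mem_nhds_tauF hu hx) fun y hy => ?_⟩
    by_contra hyC
    simp [hu1 y hyC] at hy

end

theorem stmt9_general (F : StarSubalgebra ℂ (BoundedContinuousFunction X ℂ)) (hF : IsClosed (F : Set (BoundedContinuousFunction X ℂ))) (e : X → Delta F) (he : ∀ x : X, (e x).1 = {A : Set X | A ∈ @nhds X (tauF F) x})
    (A B : Set X) :
    (∀ f ∈ ZSet F A, ∀ g ∈ ZSet F B, ∀ r : ℝ, 0 < r →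
        (XSet f r ∩ XSet g r).Nonempty) ↔
      (closure (e '' A) ∩ closure (e '' B)).Nonempty := by
  constructor
  · intro H
    obtain ⟨p, hpA, hpB⟩ := exists_fUltrafilter_XSet_mem hF H
    exact ⟨p, (mem_closure_image_iff_XSet_mem hF he).2 hpA,
      (mem_closure_image_iff_XSet_mem hF he).2 hpB⟩
  · rintro ⟨p, hpA, hpB⟩ f hf g hg r hr
    exact p.2.1.nonempty_of_mem (p.2.1.inter_mem
      ((mem_closure_image_iff_XSet_mem hF he).1 hpA f hf r hr)
      ((mem_closure_image_iff_XSet_mem hF he).1 hpB g hg r hr))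

theorem stmt9 (F : StarSubalgebra ℂ (BoundedContinuousFunction X ℂ)) (hF : IsClosed (F : Set (BoundedContinuousFunction X ℂ))) (e : X → Delta F) (he : ∀ x : X, (e x).1 = {A : Set X | A ∈ @nhds X (tauF F) x})
    (A B : Set X) (hA : A.Nonempty) (hB : B.Nonempty) :
    (∀ f ∈ ZSet F A, ∀ g ∈ ZSet F B, ∀ r : ℝ, 0 < r →
        (XSet f r ∩ XSet g r).Nonempty) ↔
      (closure (e '' A) ∩ closure (e '' B)).Nonempty :=
  stmt9_general F hF e he A B
end
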